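/- Let K be a field and F ∈ K[x]^{n×n} be nonsingular and column reduced with column degrees d and d_max = max_j d_j ≥ 1; let H be its Hermite normal form with diagonal degrees s = (s_1,…,s_n). For each i set q_i = ⌊s_i/d_max⌋ and r_i = s_i − q_i·d_max; let n̄ = n + Σ_i q_i, let E ∈ K[x]^{n×n̄} be the matrix [Ẽ_1,…,Ẽ_n] where Ẽ_i = [e_i, x^{s_i−q_i·d_max}·e_i, …, x^{s_i−d_max}·e_i] (q_i+1 columns, e_i the i-th standard basis column), and let s* ∈ ℤ^{n̄} be the concatenation over i of the q_i+1 entries (r_i, d_max, …, d_max). Suppose E = F·Q + R with Q, R ∈ K[x]^{n×n̄} and deg R < d_max, and let u* = (2·d_max,…,2·d_max) ∈ ℤ^n. Suppose N ∈ K[x]^{(n+n̄)×n̄} is a [−u*,−s*]-minimal kernel basis of the n×(n+n̄) matrix [F, −R], partitioned as N = [N_u; N_d] with N_d of dimension n̄×n̄, and let N̄ be the submatrix of the columns of N_d whose −s*-column degrees are at most 0. Then H is a column basis of E·N̄, and the nonzero columns of E·N̄ have −s-column degrees equal to 0. -/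

import Mathlib

open Polynomial Matrix

variable {K : Type*} [Field K]

/-- The degree of a polynomial, as an element of `WithBot ℤ` (`⊥` for the zero polynomial). -/
noncomputable def degZ (p : Polynomial K) : WithBot ℤ :=
  p.degree.map fun n : ℕ => (n : ℤ)

/-- The shifted column degree `cdeg_u p = max_i (deg p_i + u_i)` of a vector of polynomials. -/
noncomputable def cdegS {m : Type*} [Fintype m] (u : m → ℤ) (p : m → Polynomial K) : WithBot ℤ :=
  Finset.univ.sup fun i => degZ (p i) + (u i : WithBot ℤ)

/-- The row degree of row `i` of a polynomial matrix. -/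
noncomputable def rdeg {m n : Type*} [Fintype n] (P : Matrix m n (Polynomial K)) (i : m) :
    WithBot ℕ :=
  Finset.univ.sup fun j => (P i j).degree

/-- The shifted leading coefficient matrix `lcoeff (x^u · A · x^{-v})`. -/
noncomputable def lcoeffS {m n : Type*} (u : m → ℤ) (A : Matrix m n (Polynomial K)) (v : n → ℤ) :
    Matrix m n K :=
  Matrix.of fun i j => if 0 ≤ v j - u i then (A i j).coeff (v j - u i).toNat else 0

/-- A matrix over `K` has full column rank if its columns are linearly independent over `K`. -/
def FullColRankK {m n : Type*} (M : Matrix m n K) : Prop :=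
  LinearIndependent K fun j => fun i => M i j

/-- `A` is `u`-column reduced with `u`-column degrees `v`. -/
def IsColReducedWith {m n : Type*} [Fintype m] (u : m → ℤ) (A : Matrix m n (Polynomial K))
    (v : n → ℤ) : Prop :=
  (∀ j, cdegS u (fun i => A i j) = (v j : WithBot ℤ)) ∧ FullColRankK (lcoeffS u A v)

/-- `A` is `u`-column reduced. -/
def IsColReducedS {m n : Type*} [Fintype m] (u : m → ℤ) (A : Matrix m n (Polynomial K)) : Prop :=
  ∃ v : n → ℤ, IsColReducedWith u A v

/-- `F` is column reduced with (ordinary) column degrees `d`. -/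
def IsColReducedNat {m n : Type*} [Fintype m] (F : Matrix m n (Polynomial K)) (d : n → ℕ) : Prop :=
  IsColReducedWith (fun _ => (0 : ℤ)) F (fun j => (d j : ℤ))

/-- `N` is a (right) kernel basis of `F`. -/
def IsKernelBasis {m n k : Type*} [Fintype n] [Fintype k] (F : Matrix m n (Polynomial K))
    (N : Matrix n k (Polynomial K)) : Prop :=
  (LinearIndependent (Polynomial K) fun j => fun i => N i j) ∧
  F * N = 0 ∧
  ∀ q : n → Polynomial K, F.mulVec q = 0 → ∃ p : k → Polynomial K, N.mulVec p = q

/-- `N` is an `s`-minimal kernel basis of `F`. -/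
def IsMinimalKernelBasis {m n k : Type*} [Fintype n] [Fintype k] (F : Matrix m n (Polynomial K))
    (s : n → ℤ) (N : Matrix n k (Polynomial K)) : Prop :=
  IsKernelBasis F N ∧ IsColReducedS s N

/-- `T` is a column basis of `F`. -/
def IsColBasis {m n r : Type*} [Fintype n] [Fintype r] (F : Matrix m n (Polynomial K))
    (T : Matrix m r (Polynomial K)) : Prop :=
  (LinearIndependent (Polynomial K) fun j => fun i => T i j) ∧
  ∀ q : m → Polynomial K, (∃ p, F.mulVec p = q) ↔ (∃ p, T.mulVec p = q)

/-- `H` is in (column) Hermite normal form. -/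
def IsHermiteForm {n : ℕ} (H : Matrix (Fin n) (Fin n) (Polynomial K)) : Prop :=
  (∀ i j : Fin n, i < j → H i j = 0) ∧
  (∀ i : Fin n, (H i i).Monic) ∧
  (∀ i j : Fin n, j < i → (H i j).degree < (H i i).degree)

/-- `H` is the Hermite normal form of `F`. -/
def IsHermiteFormOf {n : ℕ} (F H : Matrix (Fin n) (Fin n) (Polynomial K)) : Prop :=
  IsHermiteForm H ∧ ∃ U : Matrix (Fin n) (Fin n) (Polynomial K), IsUnit U.det ∧ F * U = H

attribute [local instance] Classical.propDecidable

/-!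
Since `F N_u = R N_d`, we have `E N_d = F (Q N_d + N_u)`, so the columns of `E N̄` lie in the
lattice of `F`, which is the lattice of `H`. Conversely, a column `h = F w` of `H` satisfies
`deg hᵢ ≤ sᵢ`, so `h = E P` with `P` of `-s*`-column degree `≤ 0`. For `u = w - Q P` we get
`F u = R P`, of degree `≤ 2 d_max`, and the predictable degree property of the column reduced `F`
bounds `deg u` by `2 d_max`: the kernel vector `(u, P)` of `[F, -R]` has `[-u*, -s*]`-column degree
`≤ 0`. The predictable degree property of the minimal kernel basis `N` then writes `(u, P)` as a
combination of the columns of `N` of degree `≤ 0` only, so `h = E N_d z = E N̄ z`.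
A nonzero column of `E N̄` has `-s`-column degree `≤ 0` because the corresponding column of `N̄`
has `-s*`-column degree `≤ 0`, and `≥ 0` because it lies in the lattice of the triangular `H`.
-/

lemma degZ_zero : degZ (0 : K[X]) = ⊥ := rfl

lemma degZ_of_ne_zero {p : K[X]} (hp : p ≠ 0) : degZ p = (p.natDegree : ℤ) := by
  rw [degZ, degree_eq_natDegree hp]; rfl

lemma degZ_nonneg {p : K[X]} (hp : p ≠ 0) : 0 ≤ degZ p := by
  rw [degZ_of_ne_zero hp]; exact_mod_cast (p.natDegree).cast_nonneg

lemma degZ_le_coe_iff {p : K[X]} {k : ℤ} (hk : 0 ≤ k) :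
    degZ p ≤ k ↔ (p.natDegree : ℤ) ≤ k := by
  rcases eq_or_ne p 0 with rfl | hp
  · simpa [degZ_zero] using hk
  · rw [degZ_of_ne_zero hp, WithBot.coe_le_coe]

lemma WithBot.add_coe_le_coe_iff {x : WithBot ℤ} {a b : ℤ} :
    x + a ≤ b ↔ x ≤ (b - a : ℤ) := by
  cases x with
  | bot => simp
  | coe x => norm_cast; omega

lemma WithBot.coe_le_add_coe_iff {x : WithBot ℤ} {a b : ℤ} :
    (b : WithBot ℤ) ≤ x + a ↔ ((b - a : ℤ) : WithBot ℤ) ≤ x := by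
  cases x with
  | bot => simp
  | coe x => norm_cast; omega

section ColumnDegree

variable {m : Type*} [Fintype m]

lemma cdegS_le_iff {u : m → ℤ} {p : m → K[X]} {w : WithBot ℤ} :
    cdegS u p ≤ w ↔ ∀ i, degZ (p i) + u i ≤ w := by
  simp [cdegS]

lemma le_cdegS (u : m → ℤ) (p : m → K[X]) (i : m) : degZ (p i) + u i ≤ cdegS u p :=
  Finset.le_sup (f := fun i => degZ (p i) + (u i : WithBot ℤ)) (Finset.mem_univ i)

lemma cdegS_le_coe_iff {u : m → ℤ} {p : m → K[X]} {D : ℤ} :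
    cdegS u p ≤ D ↔ ∀ i, degZ (p i) ≤ (D - u i : ℤ) := by
  simp only [cdegS_le_iff, WithBot.add_coe_le_coe_iff]

lemma cdegS_neg_le_zero_iff {t : m → ℕ} {p : m → K[X]} :
    cdegS (fun i => -(t i : ℤ)) p ≤ 0 ↔ ∀ i, (p i).natDegree ≤ t i := by
  refine (cdegS_le_coe_iff (D := 0)).trans (forall_congr' fun i => ?_)
  rw [degZ_le_coe_iff (by omega)]
  omega

lemma cdegS_sum_elim {m' : Type*} [Fintype m'] (u : m → ℤ) (u' : m' → ℤ) (p : m ⊕ m' → K[X]) :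
    cdegS (Sum.elim u u') p = cdegS u (fun i => p (.inl i)) ⊔ cdegS u' (fun i => p (.inr i)) := by
  simp only [cdegS, ← Finset.univ_disjSum_univ, Finset.sup_disjSum, Sum.elim_inl, Sum.elim_inr]

end ColumnDegree

/-- The coefficient of `X ^ k` for an integer exponent `k` (zero for `k < 0`), so that
`lcoeffS u A v i j = coeffZ (A i j) (v j - u i)`. -/
noncomputable def coeffZ (p : K[X]) (k : ℤ) : K :=
  if 0 ≤ k then p.coeff k.toNat else 0

lemma coeffZ_sum {ι : Type*} (s : Finset ι) (f : ι → K[X]) (k : ℤ) :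
    coeffZ (∑ i ∈ s, f i) k = ∑ i ∈ s, coeffZ (f i) k := by
  unfold coeffZ
  split_ifs <;> simp [finsetSum_coeff]

lemma coeffZ_mul_of_degZ_le {p q : K[X]} {a b : ℤ} (hp : degZ p ≤ a) (hq : degZ q ≤ b) :
    coeffZ (p * q) (a + b) = coeffZ p a * coeffZ q b := by
  rcases eq_or_ne p 0 with rfl | hp0
  · simp [coeffZ]
  rcases eq_or_ne q 0 with rfl | hq0
  · simp [coeffZ]
  rw [degZ_of_ne_zero hp0, WithBot.coe_le_coe] at hp
  rw [degZ_of_ne_zero hq0, WithBot.coe_le_coe] at hq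
  have hab : (a + b).toNat = a.toNat + b.toNat := by omega
  simp only [coeffZ, if_pos (show 0 ≤ a by omega), if_pos (show 0 ≤ b by omega),
    if_pos (show 0 ≤ a + b by omega), hab]
  exact coeff_mul_add_eq_of_natDegree_le (by omega) (by omega)

lemma coeffZ_ne_zero_of_degZ_eq {p : K[X]} {k : ℤ} (h : degZ p = k) : coeffZ p k ≠ 0 := by
  have hp : p ≠ 0 := by rintro rfl; cases h
  rw [degZ_of_ne_zero hp, WithBot.coe_inj] at h
  subst h
  simpa [coeffZ] using hp

lemma le_degZ_of_coeffZ_ne_zero {p : K[X]} {k : ℤ} (h : coeffZ p k ≠ 0) :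
    (k : WithBot ℤ) ≤ degZ p := by
  unfold coeffZ at h
  split_ifs at h with hk
  · rw [degZ_of_ne_zero (by rintro rfl; exact h (coeff_zero _)), WithBot.coe_le_coe]
    have := le_natDegree_of_ne_zero h
    omega
  · exact absurd rfl h

lemma FullColRankK.mulVec_ne_zero {m n : Type*} [Fintype n] {M : Matrix m n K}
    (hM : FullColRankK M) {ζ : n → K} (hζ : ζ ≠ 0) : M *ᵥ ζ ≠ 0 := fun h =>
  hζ (Matrix.mulVec_injective_iff.mpr hM (h.trans (M.mulVec_zero).symm))

/-- The predictable degree property `cdeg_u (A z) = cdeg_v z`, in its nontrivial direction: the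
coefficient of `x^D` in `x^u A z`, with `D = cdeg_v z`, is `lcoeffS u A v` applied to the nonzero
vector of the coefficients of `x^D` in `x^v z`. -/
theorem IsColReducedWith.cdegS_le_cdegS_mulVec {m k : Type*} [Fintype m] [Fintype k]
    {u : m → ℤ} {A : Matrix m k K[X]} {v : k → ℤ} (hA : IsColReducedWith u A v) (z : k → K[X]) :
    cdegS v z ≤ cdegS u (A *ᵥ z) := by
  obtain ⟨hdeg, hrank⟩ := hA
  cases hD : cdegS v z with
  | bot => exact bot_le
  | coe D =>
  have hz : ∀ c, degZ (z c) ≤ (D - v c : ℤ) := cdegS_le_coe_iff.mp hD.le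
  have hA : ∀ i c, degZ (A i c) ≤ (v c - u i : ℤ) := fun i c => cdegS_le_coe_iff.mp (hdeg c).le i
  obtain ⟨c₀, hc₀⟩ : ∃ c₀, degZ (z c₀) = (D - v c₀ : ℤ) := by
    have hne : (Finset.univ : Finset k).Nonempty := by
      by_contra h
      rw [Finset.not_nonempty_iff_eq_empty] at h
      simp [cdegS, h] at hD
    obtain ⟨c₀, -, hc₀⟩ := Finset.exists_mem_eq_sup _ hne fun c => degZ (z c) + v c
    refine ⟨c₀, le_antisymm (hz c₀) (WithBot.coe_le_add_coe_iff.mp ?_)⟩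
    exact hD.ge.trans hc₀.le
  set ζ : k → K := fun c => coeffZ (z c) (D - v c)
  have hcoeff : ∀ i, coeffZ ((A *ᵥ z) i) (D - u i) = (lcoeffS u A v *ᵥ ζ) i := fun i => by
    simp only [mulVec, dotProduct, coeffZ_sum]
    refine Finset.sum_congr rfl fun c _ => ?_
    rw [show D - u i = (v c - u i) + (D - v c) by ring, coeffZ_mul_of_degZ_le (hA i c) (hz c)]
    rfl
  obtain ⟨i, hi⟩ := Function.ne_iff.mp (hrank.mulVec_ne_zero (ζ := ζ) fun h =>
    coeffZ_ne_zero_of_degZ_eq hc₀ (congrFun h c₀))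
  rw [← hcoeff] at hi
  exact (WithBot.coe_le_add_coe_iff.mpr (le_degZ_of_coeffZ_ne_zero hi)).trans (le_cdegS u _ i)

theorem IsColReducedNat.natDegree_add_le {m k : Type*} [Fintype m] [Fintype k]
    {F : Matrix m k K[X]} {d : k → ℕ} (hF : IsColReducedNat F d) {w : k → K[X]} {b : ℕ}
    (hw : ∀ a, ((F *ᵥ w) a).natDegree ≤ b) {i : k} (hwi : w i ≠ 0) :
    (w i).natDegree + d i ≤ b := by
  have hFw : cdegS (fun _ => 0) (F *ᵥ w) ≤ (b : ℤ) :=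
    cdegS_le_coe_iff.mpr fun a => by simpa [degZ_le_coe_iff] using hw a
  have hi := (le_cdegS _ w i).trans ((hF.cdegS_le_cdegS_mulVec w).trans hFw)
  rw [degZ_of_ne_zero hwi] at hi
  exact_mod_cast hi

theorem IsMinimalKernelBasis.exists_mulVec_eq {m k ι : Type*} [Fintype k] [Fintype ι]
    {F : Matrix m k K[X]} {w : k → ℤ} {N : Matrix k ι K[X]} (hN : IsMinimalKernelBasis F w N)
    {x : k → K[X]} (hx : F *ᵥ x = 0) :
    ∃ z, N *ᵥ z = x ∧ ∀ c, z c ≠ 0 → cdegS w (fun i => N i c) ≤ cdegS w x := by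
  obtain ⟨⟨-, -, hgen⟩, v, hv⟩ := hN
  obtain ⟨z, rfl⟩ := hgen x hx
  refine ⟨z, rfl, fun c hc => ?_⟩
  calc cdegS w (fun i => N i c) = v c := hv.1 c
    _ ≤ degZ (z c) + v c := le_add_of_nonneg_left (degZ_nonneg hc)
    _ ≤ cdegS v z := le_cdegS v z c
    _ ≤ cdegS w (N *ᵥ z) := hv.cdegS_le_cdegS_mulVec z

lemma range_mulVecLin_mul_le {R l m n : Type*} [CommRing R] [Fintype m] [Fintype n]
    (A : Matrix l m R) (B : Matrix m n R) :
    LinearMap.range (mulVecLin (A * B)) ≤ LinearMap.range A.mulVecLin := by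
  rw [Matrix.mulVecLin_mul]
  exact LinearMap.range_comp_le_range _ _

lemma range_mulVecLin_mul_of_isUnit_det {R l m : Type*} [CommRing R] [Fintype m] [DecidableEq m]
    (A : Matrix l m R) {U : Matrix m m R} (hU : IsUnit U.det) :
    LinearMap.range (mulVecLin (A * U)) = LinearMap.range A.mulVecLin := by
  refine le_antisymm (range_mulVecLin_mul_le A U) ?_
  simpa only [Matrix.mul_nonsing_inv_cancel_right U A hU] using range_mulVecLin_mul_le (A * U) U⁻¹

lemma isColBasis_of_range_eq {m n r : Type*} [Fintype n] [Fintype r] {F : Matrix m n K[X]}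
    {T : Matrix m r K[X]} (hT : LinearIndependent K[X] T.col)
    (h : LinearMap.range F.mulVecLin = LinearMap.range T.mulVecLin) : IsColBasis F T :=
  ⟨hT, fun v => by
    simpa only [LinearMap.mem_range, Matrix.mulVecLin_apply] using SetLike.ext_iff.mp h v⟩

lemma IsHermiteForm.natDegree_le {n : ℕ} {H : Matrix (Fin n) (Fin n) K[X]} (hH : IsHermiteForm H)
    (i j : Fin n) : (H i j).natDegree ≤ (H i i).natDegree := by
  obtain ⟨hup, -, hdeg⟩ := hH
  rcases lt_trichotomy i j with hij | rfl | hji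
  · simp [hup i j hij]
  · rfl
  · exact natDegree_le_natDegree (hdeg i j hji).le

lemma IsHermiteFormOf.range_mulVecLin_eq {n : ℕ} {F H : Matrix (Fin n) (Fin n) K[X]}
    (hH : IsHermiteFormOf F H) : LinearMap.range H.mulVecLin = LinearMap.range F.mulVecLin := by
  obtain ⟨-, U, hU, rfl⟩ := hH
  exact range_mulVecLin_mul_of_isUnit_det F hU

lemma IsHermiteFormOf.det_ne_zero {n : ℕ} {F H : Matrix (Fin n) (Fin n) K[X]}
    (hH : IsHermiteFormOf F H) (hF : F.det ≠ 0) : H.det ≠ 0 := by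
  obtain ⟨-, U, hU, rfl⟩ := hH
  rw [det_mul]
  exact mul_ne_zero hF hU.ne_zero

section LowerTriangular

variable {m : Type*} [Fintype m] [LinearOrder m] {H : Matrix m m K[X]}

/-- Look at the row of the first nonzero entry of `w`. -/
theorem zero_le_cdegS_mulVec_of_lowerTriangular (hup : ∀ i j, i < j → H i j = 0)
    (hdiag : ∀ i, H i i ≠ 0) {w : m → K[X]} (hw : H *ᵥ w ≠ 0) :
    0 ≤ cdegS (fun i => -((H i i).natDegree : ℤ)) (H *ᵥ w) := by
  obtain ⟨j, hwj, hmin⟩ := exists_minimal_of_wellFoundedLT (fun i => w i ≠ 0)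
    (Function.ne_iff.mp fun h => hw (h ▸ H.mulVec_zero))
  have hrow : (H *ᵥ w) j = H j j * w j := by
    refine Finset.sum_eq_single j (fun k _ hkj => ?_) (by simp)
    rcases hkj.lt_or_gt with hkj | hjk
    · by_cases hwk : w k = 0
      · simp [hwk]
      · exact absurd (hmin hwk hkj.le) (not_le.mpr hkj)
    · simp [hup j k hjk]
  refine le_trans ?_ (le_cdegS _ _ j)
  rw [hrow, degZ_of_ne_zero (mul_ne_zero (hdiag j) hwj), natDegree_mul (hdiag j) hwj]
  norm_cast
  omega

theorem cdegS_eq_zero_of_mem_range_of_lowerTriangular (hup : ∀ i j, i < j → H i j = 0)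
    (hdiag : ∀ i, H i i ≠ 0) {v : m → K[X]} (hv : v ∈ LinearMap.range H.mulVecLin) (hv0 : v ≠ 0)
    (hdeg : ∀ i, (v i).natDegree ≤ (H i i).natDegree) :
    cdegS (fun i => -((H i i).natDegree : ℤ)) v = 0 := by
  obtain ⟨w, rfl⟩ := hv
  exact le_antisymm (cdegS_neg_le_zero_iff.mpr hdeg)
    (zero_le_cdegS_mulVec_of_lowerTriangular hup hdiag hv0)

end LowerTriangular

theorem exists_eq_add_sum_mul_X_pow {R : Type*} [CommRing R] [Nontrivial R] (r e q : ℕ) (g : R[X])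
    (hg : g.natDegree ≤ r + q * e) :
    ∃ (p₀ : R[X]) (c : Fin q → R[X]), p₀.natDegree ≤ r ∧ (∀ k, (c k).natDegree ≤ e) ∧
      g = p₀ + ∑ k, c k * X ^ (r + k * e) := by
  induction q generalizing g with
  | zero => exact ⟨g, Fin.elim0, by simpa using hg, fun k => k.elim0, by simp⟩
  | succ q ih =>
    have hX : (X ^ (r + q * e) : R[X]).Monic := monic_X_pow _
    obtain ⟨p₀, c, hp₀, hc, hsum⟩ := ih (g %ₘ X ^ (r + q * e))
      ((natDegree_modByMonic_le _ hX).trans (natDegree_X_pow_le _))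
    have htop : (g /ₘ X ^ (r + q * e)).natDegree ≤ e := by
      rw [natDegree_divByMonic _ hX, natDegree_X_pow]
      rw [Nat.succ_mul] at hg
      omega
    refine ⟨p₀, Fin.snoc c (g /ₘ X ^ (r + q * e)), hp₀,
      Fin.lastCases (by rwa [Fin.snoc_last]) fun k => by simpa only [Fin.snoc_castSucc] using hc k,
      ?_⟩
    rw [Fin.sum_univ_castSucc]
    simp only [Fin.snoc_castSucc, Fin.snoc_last, Fin.val_castSucc, Fin.val_last]
    conv_lhs => rw [← modByMonic_add_div g (X ^ (r + q * e)), hsum]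
    ring

section Expansion

variable {n : ℕ} (dmax : ℕ) (r q : Fin n → ℕ)

/-- The matrix `E = [Ẽ₁, …, Ẽₙ]`, whose block `Ẽᵢ` has the columns
`eᵢ, X ^ rᵢ eᵢ, X ^ (rᵢ + dmax) eᵢ, …, X ^ (rᵢ + (qᵢ - 1) dmax) eᵢ`. -/
noncomputable def expansionMatrix : Matrix (Fin n) ((i : Fin n) × Fin (q i + 1)) K[X] :=
  Matrix.of fun a c => if a = c.1 then
    (if c.2 = (0 : Fin (q c.1 + 1)) then 1 else X ^ (r c.1 + ((c.2 : ℕ) - 1) * dmax)) else 0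

/-- The entries of the shift `s*`. -/
def expansionDegree (c : (i : Fin n) × Fin (q i + 1)) : ℕ :=
  if c.2 = (0 : Fin (q c.1 + 1)) then r c.1 else dmax

variable {dmax r q}

lemma expansionDegree_le (hr : ∀ i, r i ≤ dmax) (c : (i : Fin n) × Fin (q i + 1)) :
    expansionDegree dmax r q c ≤ dmax := by
  unfold expansionDegree
  split_ifs
  exacts [hr c.1, le_rfl]

lemma expansionMatrix_mulVec_apply (P : ((i : Fin n) × Fin (q i + 1)) → K[X]) (a : Fin n) :
    (expansionMatrix dmax r q *ᵥ P) a
      = P ⟨a, 0⟩ + ∑ k : Fin (q a), P ⟨a, k.succ⟩ * X ^ (r a + k * dmax) := by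
  rw [mulVec, dotProduct, ← Finset.univ_sigma_univ, Finset.sum_sigma,
    Finset.sum_eq_single a (fun i _ hi => Finset.sum_eq_zero fun k _ => ?_) (by simp),
    Fin.sum_univ_succ]
  · simp [expansionMatrix, mul_comm]
  · simp [expansionMatrix, Ne.symm hi]

theorem exists_expansionMatrix_mulVec_eq (g : Fin n → K[X])
    (hg : ∀ i, (g i).natDegree ≤ r i + q i * dmax) :
    ∃ P, (∀ c, (P c).natDegree ≤ expansionDegree dmax r q c) ∧
      expansionMatrix dmax r q *ᵥ P = g := by
  choose p₀ c hp₀ hc hsum using fun i => exists_eq_add_sum_mul_X_pow (r i) dmax (q i) (g i) (hg i)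
  refine ⟨fun x => Fin.cases (p₀ x.1) (c x.1) x.2, fun ⟨i, k⟩ => ?_, funext fun a => ?_⟩
  · induction k using Fin.cases with
    | zero => simpa [expansionDegree] using hp₀ i
    | succ k => simpa [expansionDegree, Fin.succ_ne_zero] using hc i k
  · simp [expansionMatrix_mulVec_apply, hsum a]

theorem natDegree_expansionMatrix_mulVec_le {P : ((i : Fin n) × Fin (q i + 1)) → K[X]}
    (hP : ∀ c, (P c).natDegree ≤ expansionDegree dmax r q c) (a : Fin n) :
    ((expansionMatrix dmax r q *ᵥ P) a).natDegree ≤ r a + q a * dmax := by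
  rw [expansionMatrix_mulVec_apply]
  refine natDegree_add_le_of_degree_le ?_ (natDegree_sum_le_of_forall_le _ _ fun k _ => ?_)
  · simpa [expansionDegree] using (hP ⟨a, 0⟩).trans (Nat.le_add_right _ _)
  · have hk : (k : ℕ) * dmax + dmax ≤ q a * dmax := by
      rw [← Nat.succ_mul]; exact Nat.mul_le_mul_right _ k.isLt
    have := hP ⟨a, k.succ⟩
    simp only [expansionDegree, Fin.succ_ne_zero, if_false] at this
    refine (natDegree_mul_le).trans ?_
    rw [natDegree_X_pow]
    omega

end Expansion

section LowDegreeColumns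

variable {ι κ : Type*} [Fintype ι]

/-- The paper's `N̄`, with the discarded columns replaced by zero columns. -/
noncomputable def lowDegreeCols (u : ι → ℤ) (N : Matrix ι κ K[X]) : Matrix ι κ K[X] :=
  Matrix.of fun a c => if cdegS u (fun b => N b c) ≤ 0 then N a c else 0

lemma lowDegreeCols_eq_mul_diagonal [Fintype κ] (u : ι → ℤ) (N : Matrix ι κ K[X]) :
    lowDegreeCols u N =
      N * diagonal fun c => if cdegS u (fun b => N b c) ≤ 0 then (1 : K[X]) else 0 :=
  Matrix.ext fun a c => by simp [lowDegreeCols, mul_diagonal]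

lemma lowDegreeCols_mulVec [Fintype κ] {u : ι → ℤ} {N : Matrix ι κ K[X]} {z : κ → K[X]}
    (hz : ∀ c, z c ≠ 0 → cdegS u (fun b => N b c) ≤ 0) : lowDegreeCols u N *ᵥ z = N *ᵥ z := by
  rw [lowDegreeCols_eq_mul_diagonal, ← mulVec_mulVec]
  congr 1
  funext c
  by_cases hc : z c = 0 <;> simp [mulVec_diagonal, hc, hz c]

lemma natDegree_lowDegreeCols_le (t : ι → ℕ) (N : Matrix ι κ K[X]) (b : ι) (c : κ) :
    (lowDegreeCols (fun b => -(t b : ℤ)) N b c).natDegree ≤ t b := by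
  rw [lowDegreeCols, Matrix.of_apply]
  split_ifs with h
  exacts [cdegS_neg_le_zero_iff.mp h b, by simp]

theorem range_mul_lowDegreeCols_le [Fintype κ] {m k : Type*} [Fintype k] {F : Matrix m k K[X]}
    {Q : Matrix k ι K[X]} {E R : Matrix m ι K[X]} (hQR : E = F * Q + R) {Nu : Matrix k κ K[X]}
    {Nd : Matrix ι κ K[X]} (hN : fromCols F (-R) * fromRows Nu Nd = 0) (u : ι → ℤ) :
    LinearMap.range (mulVecLin (E * lowDegreeCols u Nd)) ≤ LinearMap.range F.mulVecLin := by
  have hFNu : F * Nu = R * Nd := by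
    rwa [fromCols_mul_fromRows, Matrix.neg_mul, add_neg_eq_zero] at hN
  have hENd : E * Nd = F * (Q * Nd + Nu) := by
    rw [hQR, Matrix.add_mul, Matrix.mul_add, Matrix.mul_assoc, hFNu]
  rw [lowDegreeCols_eq_mul_diagonal, ← Matrix.mul_assoc, hENd, Matrix.mul_assoc]
  exact range_mulVecLin_mul_le _ _

theorem mulVec_mem_range_mul_lowDegreeCols [Fintype κ] {m k : Type*} [Fintype m] [Fintype k]
    {F : Matrix m k K[X]} {d : k → ℕ} (hF : IsColReducedNat F d)
    {Q : Matrix k ι K[X]} {E R : Matrix m ι K[X]} (hQR : E = F * Q + R) {e : ℕ}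
    (hR : ∀ a c, (R a c).natDegree ≤ e) {t : ι → ℕ} (ht : ∀ c, t c ≤ e)
    {Nu : Matrix k κ K[X]} {Nd : Matrix ι κ K[X]}
    (hN : IsMinimalKernelBasis (fromCols F (-R))
      (Sum.elim (fun _ => -(2 * e : ℤ)) (fun c => -(t c : ℤ))) (fromRows Nu Nd))
    {P : ι → K[X]} (hP : ∀ c, (P c).natDegree ≤ t c)
    (hEP : E *ᵥ P ∈ LinearMap.range F.mulVecLin) :
    E *ᵥ P ∈ LinearMap.range (mulVecLin (E * lowDegreeCols (fun c => -(t c : ℤ)) Nd)) := by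
  obtain ⟨w, hw⟩ := hEP
  set u := w - Q *ᵥ P
  have hFu : F *ᵥ u = R *ᵥ P := by
    rw [mulVec_sub, ← Matrix.mulVecLin_apply, hw, hQR, add_mulVec, mulVec_mulVec]
    abel
  have hRP : ∀ a, ((R *ᵥ P) a).natDegree ≤ 2 * e := fun a =>
    natDegree_sum_le_of_forall_le _ _ fun c _ => (natDegree_mul_le (p := R a c)).trans (by
      have := (hP c).trans (ht c)
      have := hR a c
      omega)
  have hu : ∀ i, (u i).natDegree ≤ 2 * e := fun i => by
    by_cases hui : u i = 0
    · simp [hui]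
    · have := hF.natDegree_add_le (hFu ▸ hRP) hui
      omega
  have hker : fromCols F (-R) *ᵥ Sum.elim u P = 0 := by
    rw [fromCols_mulVec_sumElim, neg_mulVec, hFu, add_neg_cancel]
  have hdeg : cdegS (Sum.elim (fun _ => -(2 * e : ℤ)) fun c => -(t c : ℤ)) (Sum.elim u P) ≤ 0 := by
    rw [cdegS_sum_elim]
    refine sup_le ?_ (cdegS_neg_le_zero_iff.mpr hP)
    simpa only [Nat.cast_mul, Nat.cast_ofNat, Sum.elim_inl] using
      cdegS_neg_le_zero_iff (t := fun _ => 2 * e) |>.mpr hu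
  obtain ⟨z, hz, hsel⟩ := hN.exists_mulVec_eq hker
  have hNd : Nd *ᵥ z = P := funext fun b => by
    simpa [fromRows_mulVec] using congrFun hz (.inr b)
  refine ⟨z, ?_⟩
  rw [mulVecLin_apply, ← mulVec_mulVec, lowDegreeCols_mulVec fun c hc => ?_, hNd]
  refine le_trans ?_ ((hsel c hc).trans hdeg)
  rw [cdegS_sum_elim]
  exact le_sup_right

end LowDegreeColumns

theorem hermite_from_remainder_kernel_basis_general {n : ℕ}
    (F H : Matrix (Fin n) (Fin n) (Polynomial K)) (d : Fin n → ℕ)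
    (hFns : F.det ≠ 0) (hFcr : IsColReducedNat F d)
    (hH : IsHermiteFormOf F H)
    (dmax : ℕ) (hd1 : 1 ≤ dmax)
    (s : Fin n → ℕ) (hs : ∀ i, s i = (H i i).natDegree)
    (q r : Fin n → ℕ) (hq : ∀ i, q i = s i / dmax) (hr : ∀ i, r i = s i % dmax)
    (E : Matrix (Fin n) ((i : Fin n) × Fin (q i + 1)) (Polynomial K))
    (hE : ∀ (a : Fin n) (c : (i : Fin n) × Fin (q i + 1)),
      E a c = if a = c.1 then
          (if c.2 = (0 : Fin (q c.1 + 1)) then 1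
            else Polynomial.X ^ (r c.1 + ((c.2 : ℕ) - 1) * dmax))
        else 0)
    (sstar : ((i : Fin n) × Fin (q i + 1)) → ℤ)
    (hsstar : ∀ c, sstar c =
      if c.2 = (0 : Fin (q c.1 + 1)) then (r c.1 : ℤ) else (dmax : ℤ))
    (Q R : Matrix (Fin n) ((i : Fin n) × Fin (q i + 1)) (Polynomial K))
    (hQR : E = F * Q + R)
    (hRdeg : ∀ a c, (R a c).degree < (dmax : WithBot ℕ))
    (Nu : Matrix (Fin n) ((i : Fin n) × Fin (q i + 1)) (Polynomial K))
    (Nd : Matrix ((i : Fin n) × Fin (q i + 1)) ((i : Fin n) × Fin (q i + 1)) (Polynomial K))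
    (hN : IsMinimalKernelBasis (fromCols F (-R))
      (Sum.elim (fun _ : Fin n => -(2 * dmax : ℤ)) (fun c => -(sstar c)))
      (fromRows Nu Nd))
    (Nbar : Matrix ((i : Fin n) × Fin (q i + 1)) ((i : Fin n) × Fin (q i + 1)) (Polynomial K))
    (hNbar : ∀ a c, Nbar a c =
      if cdegS (fun b => -(sstar b)) (fun b => Nd b c) ≤ (0 : WithBot ℤ) then Nd a c else 0) :
    IsColBasis (E * Nbar) H ∧
    ∀ c, (∃ a, (E * Nbar) a c ≠ 0) →
      cdegS (fun i : Fin n => -(s i : ℤ)) (fun a => (E * Nbar) a c) = (0 : WithBot ℤ) := by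
  have hE' : E = expansionMatrix dmax r q := Matrix.ext hE
  have hsstar' : (fun c => -(sstar c)) = fun c => -(expansionDegree dmax r q c : ℤ) :=
    funext fun c => by rw [hsstar, expansionDegree]; split_ifs <;> rfl
  rw [hsstar'] at hN hNbar
  have hNbar' : Nbar = lowDegreeCols (fun c => -(expansionDegree dmax r q c : ℤ)) Nd :=
    Matrix.ext hNbar
  have hsrq i : (H i i).natDegree = r i + q i * dmax := by rw [← hs, hr, hq, Nat.mod_add_div']
  have hrange := hH.range_mulVecLin_eq
  have hle : LinearMap.range (mulVecLin (E * Nbar)) ≤ LinearMap.range H.mulVecLin := by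
    rw [hNbar', hrange]
    exact range_mul_lowDegreeCols_le hQR hN.1.2.1 _
  have hge : LinearMap.range H.mulVecLin ≤ LinearMap.range (mulVecLin (E * Nbar)) := by
    rw [Matrix.range_mulVecLin H, Submodule.span_le]
    rintro _ ⟨j, rfl⟩
    obtain ⟨P, hP, hEP⟩ :=
      exists_expansionMatrix_mulVec_eq (H.col j) fun i => hsrq i ▸ hH.1.natDegree_le i j
    rw [← hE'] at hEP
    rw [← hEP, hNbar']
    refine mulVec_mem_range_mul_lowDegreeCols hFcr hQR
      (fun a c => natDegree_le_iff_degree_le.mpr (hRdeg a c).le)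
      (expansionDegree_le fun i => hr i ▸ (Nat.mod_lt _ hd1).le) hN hP ?_
    rw [hEP, ← hrange]
    exact ⟨Pi.single j 1, mulVec_single_one H j⟩
  refine ⟨isColBasis_of_range_eq (linearIndependent_cols_of_det_ne_zero (hH.det_ne_zero hFns))
    (hle.antisymm hge), fun c ⟨a, hac⟩ => ?_⟩
  have hNbar_deg b : (Nbar b c).natDegree ≤ expansionDegree dmax r q b :=
    hNbar' ▸ natDegree_lowDegreeCols_le _ Nd b c
  have hcol := cdegS_eq_zero_of_mem_range_of_lowerTriangular hH.1.1 (fun i => (hH.1.2.1 i).ne_zero)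
    (hle ⟨Pi.single c 1, mulVec_single_one _ c⟩) (fun h => hac (congrFun h a)) fun i =>
      hsrq i ▸ hE' ▸ natDegree_expansionMatrix_mulVec_le hNbar_deg i
  simp only [← hs] at hcol
  exact hcol

/-- Lemma 4: with `E = F·Q + R`, `deg R < d_max`, and
`u* = (2·d_max,…,2·d_max)`, if `N = [N_u; N_d]` is a `[-u*,-s*]`-minimal kernel basis of
`[F, -R]` and `N̄` consists of the columns of `N_d` of `-s*`-column degree at most `0`
(here: the other columns are zeroed out), then the Hermite normal form `H` of `F` is a column
basis of `E·N̄`, and the nonzero columns of `E·N̄` have `-s`-column degree `0`. -/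
theorem hermite_from_remainder_kernel_basis {n : ℕ}
    (F H : Matrix (Fin n) (Fin n) (Polynomial K)) (d : Fin n → ℕ)
    (hFns : F.det ≠ 0) (hFcr : IsColReducedNat F d)
    (hH : IsHermiteFormOf F H)
    (dmax : ℕ) (hdmax : dmax = Finset.univ.sup d) (hd1 : 1 ≤ dmax)
    (s : Fin n → ℕ) (hs : ∀ i, s i = (H i i).natDegree)
    (q r : Fin n → ℕ) (hq : ∀ i, q i = s i / dmax) (hr : ∀ i, r i = s i % dmax)
    (E : Matrix (Fin n) ((i : Fin n) × Fin (q i + 1)) (Polynomial K))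
    (hE : ∀ (a : Fin n) (c : (i : Fin n) × Fin (q i + 1)),
      E a c = if a = c.1 then
          (if c.2 = (0 : Fin (q c.1 + 1)) then 1
            else Polynomial.X ^ (r c.1 + ((c.2 : ℕ) - 1) * dmax))
        else 0)
    (sstar : ((i : Fin n) × Fin (q i + 1)) → ℤ)
    (hsstar : ∀ c, sstar c =
      if c.2 = (0 : Fin (q c.1 + 1)) then (r c.1 : ℤ) else (dmax : ℤ))
    (Q R : Matrix (Fin n) ((i : Fin n) × Fin (q i + 1)) (Polynomial K))
    (hQR : E = F * Q + R)
    (hRdeg : ∀ a c, (R a c).degree < (dmax : WithBot ℕ))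
    (Nu : Matrix (Fin n) ((i : Fin n) × Fin (q i + 1)) (Polynomial K))
    (Nd : Matrix ((i : Fin n) × Fin (q i + 1)) ((i : Fin n) × Fin (q i + 1)) (Polynomial K))
    (hN : IsMinimalKernelBasis (fromCols F (-R))
      (Sum.elim (fun _ : Fin n => -(2 * dmax : ℤ)) (fun c => -(sstar c)))
      (fromRows Nu Nd))
    (Nbar : Matrix ((i : Fin n) × Fin (q i + 1)) ((i : Fin n) × Fin (q i + 1)) (Polynomial K))
    (hNbar : ∀ a c, Nbar a c =
      if cdegS (fun b => -(sstar b)) (fun b => Nd b c) ≤ (0 : WithBot ℤ) then Nd a c else 0) :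
    IsColBasis (E * Nbar) H ∧
    ∀ c, (∃ a, (E * Nbar) a c ≠ 0) →
      cdegS (fun i : Fin n => -(s i : ℤ)) (fun a => (E * Nbar) a c) = (0 : WithBot ℤ) :=
  hermite_from_remainder_kernel_basis_general F H d hFns hFcr hH dmax hd1 s hs q r hq hr E hE sstar
    hsstar Q R hQR hRdeg Nu Nd hN Nbar hNbar
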